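/- With T, T_h symmetric operators on a Hilbert space H, and eigenpairs T u = λ^{-1} u, T_h u_h = λ_h^{-1} u_h with (u,u_h) ≠ 0, the eigenvalue error splits as λ_h − λ = (λ λ_h/(u,u_h)) [ ((T−T_h)u, u) + ((T−T_h)(u_h − u), u) ], and hence |λ_h − λ| ≤ C ( |((T−T_h)u, u)| + ‖(T−T_h)‖_{L(H)} ‖u_h − u‖ ‖u‖ ) for C = |λ λ_h|/|(u,u_h)|. -/

import Mathlib

open RealInnerProductSpace

/-- Eigenvalue error splitting and bound: with `T, T_h` bounded symmetric operators,
`T u = λ⁻¹ u`, `T_h u_h = λ_h⁻¹ u_h`, `(u, u_h) ≠ 0`,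
`λ_h − λ = (λ λ_h/(u,u_h)) [((T−T_h)u, u) + ((T−T_h)(u_h − u), u)]`, and hence
`|λ_h − λ| ≤ C (|((T−T_h)u, u)| + ‖T−T_h‖ ‖u_h − u‖ ‖u‖)` with
`C = |λ λ_h|/|(u,u_h)|`. -/
theorem eigenvalue_error_splitting
    {H : Type*} [NormedAddCommGroup H] [InnerProductSpace ℝ H] [CompleteSpace H]
    (T Th : H →L[ℝ] H)
    (hT : ∀ x y : H, ⟪T x, y⟫ = ⟪x, T y⟫)
    (hTh : ∀ x y : H, ⟪Th x, y⟫ = ⟪x, Th y⟫)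
    (lam lamh : ℝ) (hlam : lam ≠ 0) (hlamh : lamh ≠ 0)
    (u uh : H)
    (hu : T u = lam⁻¹ • u) (huh : Th uh = lamh⁻¹ • uh)
    (hinner : ⟪u, uh⟫ ≠ 0) :
    lamh - lam = (lam * lamh / ⟪u, uh⟫) *
        (⟪(T - Th) u, u⟫ + ⟪(T - Th) (uh - u), u⟫) ∧
    |lamh - lam| ≤ (|lam * lamh| / |⟪u, uh⟫|) *
        (|⟪(T - Th) u, u⟫| + ‖T - Th‖ * ‖uh - u‖ * ‖u‖) := by
  have key : ⟪(T - Th) u, u⟫ + ⟪(T - Th) (uh - u), u⟫ = (lam⁻¹ - lamh⁻¹) * ⟪u, uh⟫ := by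
    have h1 : (T - Th) u + (T - Th) (uh - u) = (T - Th) uh := by
      rw [← map_add]
      congr 1
      abel
    have h2 : ⟪(T - Th) u, u⟫ + ⟪(T - Th) (uh - u), u⟫ = ⟪(T - Th) uh, u⟫ := by
      rw [← inner_add_left, h1]
    rw [h2]
    have h3 : (T - Th) uh = T uh - Th uh := by simp
    rw [h3, inner_sub_left, hT uh u, hu, huh, real_inner_smul_right,
      real_inner_smul_left, real_inner_comm uh u]
    ring
  have hid : lamh - lam = (lam * lamh / ⟪u, uh⟫) *
      (⟪(T - Th) u, u⟫ + ⟪(T - Th) (uh - u), u⟫) := by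
    rw [key]
    field_simp
  refine ⟨hid, ?_⟩
  rw [hid, abs_mul, abs_div]
  gcongr
  calc |⟪(T - Th) u, u⟫ + ⟪(T - Th) (uh - u), u⟫|
      ≤ |⟪(T - Th) u, u⟫| + |⟪(T - Th) (uh - u), u⟫| := abs_add_le _ _
    _ ≤ |⟪(T - Th) u, u⟫| + ‖T - Th‖ * ‖uh - u‖ * ‖u‖ := by
        gcongr
        calc |⟪(T - Th) (uh - u), u⟫| ≤ ‖(T - Th) (uh - u)‖ * ‖u‖ :=
              abs_real_inner_le_norm _ _
          _ ≤ ‖T - Th‖ * ‖uh - u‖ * ‖u‖ := by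
              gcongr
              exact (T - Th).le_opNorm _
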